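/- Fix 0 < q < 1 and an integer n ≥ 0. The series Z(n) = Σ over all pairs (A,B), where A ranges over finite subsets of {…,−2,−1,0} and B over finite subsets of {1,2,3,…} with |B| = |A| + n, of q^{2(Σ_{y∈B} y − Σ_{x∈A} x)}, converges, and Z(n) = q^{n(n+1)} / ∏_{m=1}^∞ (1 − q^{2m}). -/

import Mathlib

/-- Admissible pairs `(A,B)`: `A` a finite subset of `{…,−1,0}`, `B` a finite subset of
`{1,2,…}` with `|B| = |A| + n`. -/
def KinkPairs (n : ℕ) : Type :=
  {p : Finset ℤ × Finset ℤ //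
    (∀ x ∈ p.1, x ≤ 0) ∧ (∀ y ∈ p.2, 1 ≤ y) ∧ p.2.card = p.1.card + n}

/-- The weight `q^{2(Σ_{y∈B} y − Σ_{x∈A} x)}` of a pair `(A,B)`. -/
noncomputable def kinkWeight (q : ℝ) {n : ℕ} (p : KinkPairs n) : ℝ :=
  q ^ (2 * ((∑ y ∈ p.val.2, y) - ∑ x ∈ p.val.1, x))

/-! Reading the pair `(A, B)` through its Maya diagram `D = B ∪ (ℤ≤0 \ A)`, enumerated
decreasingly as `d 0 > d 1 > ⋯` (so `d i = n - i` for large `i`), the gaps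
`c m = d m - d (m + 1) - 1` are the multiplicities of the parts `m + 1` of a partition, and
`(A, B) ↦ c` is a bijection onto all finitely supported `c : ℕ →₀ ℕ`. Comparing with the empty
partition (`A = ∅`, `B = {1, …, n}`) gives `ΣB - ΣA = n(n+1)/2 + Σ (m+1) c m`. So
`Z(n) = q^{n(n+1)} Σ_c ∏ (q^{2(m+1)})^{c m}`, and Euler's product formula finishes: the partial
sums over the boxes `{c | supp c ⊆ s, c < K}` are the products `∏_{m∈s} Σ_{k<K} q^{2(m+1)k}`,
which increase to `1 / ∏ (1 - q^{2(m+1)})`. -/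

open Finset Filter Topology

section EulerProduct

variable {ι : Type*}

lemma prod_sum_range_pow_eq_sum_finsupp (s : Finset ι) (r : ι → ℝ) (K : ℕ) :
    ∏ i ∈ s, ∑ k ∈ range K, r i ^ k
      = ∑ c ∈ s.finsupp fun _ => range K, c.prod fun i k => r i ^ k := by
  classical
  rw [prod_sum, Finset.finsupp, sum_map]
  refine sum_congr rfl fun p _ => ?_
  rw [Function.Embedding.coeFn_mk,
    Finsupp.prod_of_support_subset _ (Finsupp.support_indicator_subset _ _) _ fun _ _ => pow_zero _]
  refine Eq.trans ?_ (prod_attach s _)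
  exact prod_congr rfl fun i _ => by rw [Finsupp.indicator_of_mem i.2]

lemma exists_subset_finsupp_range (u : Finset (ι →₀ ℕ)) :
    ∃ (s : Finset ι) (K : ℕ), u ⊆ s.finsupp fun _ => range K := by
  classical
  refine ⟨u.biUnion Finsupp.support, u.sup (fun c => c.support.sup c) + 1, fun c hc => ?_⟩
  rw [mem_finsupp_iff]
  refine ⟨subset_biUnion_of_mem _ hc, fun i _ => mem_range.2 (Nat.lt_succ_of_le ?_)⟩
  by_cases hi : i ∈ c.support
  · exact (le_sup (f := c) hi).trans (le_sup (f := fun c : ι →₀ ℕ => c.support.sup c) hc)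
  · simp [Finsupp.notMem_support_iff.1 hi]

theorem hasSum_finsupp_prod_pow {r : ι → ℝ} (hr0 : ∀ i, 0 ≤ r i) (hr1 : ∀ i, r i < 1)
    (hr : Summable r) :
    HasSum (fun c : ι →₀ ℕ => c.prod fun i k => r i ^ k) (∏' i, (1 - r i))⁻¹ := by
  classical
  have hpos : ∀ i, 0 < 1 - r i := fun i => sub_pos.2 (hr1 i)
  obtain ⟨Q, hQ, hQpos⟩ : ∃ Q, HasProd (fun i => 1 - r i) Q ∧ 0 < Q := by
    have hlog := (Real.summable_log_one_add_of_summable hr.neg).hasSum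
    simp only [← sub_eq_add_neg] at hlog
    exact ⟨_, Real.hasProd_of_hasSum_log hpos hlog, Real.exp_pos _⟩
  set P : Finset ι → ℝ := fun s => ∏ i ∈ s, (1 - r i)⁻¹
  have hP : Tendsto P atTop (𝓝 Q⁻¹) := hQ.inv₀ hQpos.ne'
  have hP_mono : Monotone P := fun s t hst =>
    prod_le_prod_of_subset_of_one_le hst (fun i _ => (inv_pos.2 (hpos i)).le)
      fun i _ _ => one_le_inv₀ (hpos i) |>.2 (by linarith [hr0 i])
  have hgeom : ∀ i, HasSum (fun k => r i ^ k) (1 - r i)⁻¹ :=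
    fun i => hasSum_geometric_of_lt_one (hr0 i) (hr1 i)
  have hbox_le (s : Finset ι) (K : ℕ) : ∏ i ∈ s, ∑ k ∈ range K, r i ^ k ≤ P s :=
    prod_le_prod (fun i _ => sum_nonneg fun k _ => pow_nonneg (hr0 i) k)
      fun i _ => sum_le_hasSum _ (fun k _ => pow_nonneg (hr0 i) k) (hgeom i)
  have hbox_tendsto (s : Finset ι) :
      Tendsto (fun K => ∏ i ∈ s, ∑ k ∈ range K, r i ^ k) atTop (𝓝 (P s)) :=
    tendsto_finsetProd s fun i _ => (hgeom i).tendsto_sum_nat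
  rw [hQ.tprod_eq]
  refine hasSum_of_isLUB_of_nonneg _ (fun c => prod_nonneg fun i _ => pow_nonneg (hr0 i) _)
    ⟨?_, fun b hb => ?_⟩
  · rintro _ ⟨u, rfl⟩
    obtain ⟨s, K, hu⟩ := exists_subset_finsupp_range u
    calc ∑ c ∈ u, c.prod (fun i k => r i ^ k)
        ≤ ∑ c ∈ s.finsupp fun _ => range K, c.prod fun i k => r i ^ k :=
          sum_le_sum_of_subset_of_nonneg hu fun c _ _ =>
            prod_nonneg fun i _ => pow_nonneg (hr0 i) _
      _ = ∏ i ∈ s, ∑ k ∈ range K, r i ^ k := (prod_sum_range_pow_eq_sum_finsupp s r K).symm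
      _ ≤ P s := hbox_le s K
      _ ≤ Q⁻¹ := hP_mono.ge_of_tendsto hP s
  · refine le_of_tendsto' hP fun s => le_of_tendsto' (hbox_tendsto s) fun K => ?_
    rw [prod_sum_range_pow_eq_sum_finsupp]
    exact hb ⟨_, rfl⟩

end EulerProduct

section StrictAntiSeq

variable {d : ℕ → ℤ} {n K : ℕ}

lemma lt_of_mem_image_range (hd : StrictAnti d) (hK : ∀ i, K ≤ i → d i = n - i) {x : ℤ}
    (hx : x ∈ (range K).image d) : (n : ℤ) - K < x := by
  obtain ⟨i, hi, rfl⟩ := mem_image.1 hx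
  exact hK K le_rfl ▸ hd (mem_range.1 hi)

lemma range_eq_image_range_union_Iic (hK : ∀ i, K ≤ i → d i = n - i) :
    Set.range d = ↑((range K).image d) ∪ Set.Iic ((n : ℤ) - K) := by
  ext x
  simp only [coe_image, coe_range, Set.mem_union, Set.mem_image, Set.mem_Iio, Set.mem_range,
    Set.mem_Iic]
  constructor
  · rintro ⟨i, rfl⟩
    by_cases hi : i < K
    · exact Or.inl ⟨i, hi, rfl⟩
    · right; rw [hK i (not_lt.1 hi)]; omega
  · rintro (⟨i, -, rfl⟩ | hx)
    · exact ⟨i, rfl⟩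
    · exact ⟨(n - x).toNat, by rw [hK _ (by omega)]; omega⟩

lemma mem_Ioc_sdiff_image_range_iff (hK : ∀ i, K ≤ i → d i = n - i) (x : ℤ) :
    x ∈ Ioc ((n : ℤ) - K) 0 \ (range K).image d ↔ x ≤ 0 ∧ x ∉ Set.range d := by
  rw [range_eq_image_range_union_Iic hK, Finset.mem_sdiff, mem_Ioc]
  simp only [Set.mem_union, mem_coe, Set.mem_Iic, not_or]
  constructor
  · rintro ⟨⟨h₁, h₂⟩, h₃⟩; exact ⟨h₂, h₃, by omega⟩
  · rintro ⟨h₂, h₃, h₁⟩; exact ⟨⟨by omega, h₂⟩, h₃⟩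

lemma mem_image_range_sdiff_Ioc_iff (hd : StrictAnti d) (hK : ∀ i, K ≤ i → d i = n - i)
    (hnK : n ≤ K) (y : ℤ) :
    y ∈ (range K).image d \ Ioc ((n : ℤ) - K) 0 ↔ 1 ≤ y ∧ y ∈ Set.range d := by
  rw [range_eq_image_range_union_Iic hK, Finset.mem_sdiff, mem_Ioc]
  simp only [Set.mem_union, mem_coe, Set.mem_Iic]
  constructor
  · rintro ⟨hy, h⟩
    have := lt_of_mem_image_range hd hK hy
    exact ⟨by omega, Or.inl hy⟩
  · rintro ⟨h₁, hy | hy⟩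
    · exact ⟨hy, by omega⟩
    · omega

lemma card_image_range_sdiff_Ioc (hd : StrictAnti d) (hnK : n ≤ K) :
    #((range K).image d \ Ioc ((n : ℤ) - K) 0)
      = #(Ioc ((n : ℤ) - K) 0 \ (range K).image d) + n := by
  have h₁ := card_sdiff_add_card_inter ((range K).image d) (Ioc ((n : ℤ) - K) 0)
  have h₂ := card_sdiff_add_card_inter (Ioc ((n : ℤ) - K) 0) ((range K).image d)
  rw [card_image_of_injective _ hd.injective, card_range] at h₁
  rw [Int.card_Ioc, inter_comm] at h₂
  omega

lemma exists_strictAnti_range_eq (s : Finset ℤ) (a : ℤ) (hs : ∀ x ∈ s, a < x) :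
    ∃ d : ℕ → ℤ, StrictAnti d ∧ Set.range d = ↑s ∪ Set.Iic a ∧
      ∀ i, #s ≤ i → d i = a + #s - i := by
  induction s using Finset.induction_on_max with
  | empty =>
    refine ⟨fun i => a - i, strictAnti_nat_of_succ_lt fun i => by push_cast; omega,
      ?_, fun i _ => by simp⟩
    ext x
    simp only [coe_empty, Set.empty_union, Set.mem_range, Set.mem_Iic]
    exact ⟨fun ⟨i, hi⟩ => by omega, fun hx => ⟨(a - x).toNat, by omega⟩⟩
  | insert b s hb ih =>
    obtain ⟨d, hd, hrange, htail⟩ := ih fun x hx => hs x (mem_insert_of_mem hx)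
    have hd0 : d 0 < b := by
      have : d 0 ∈ (↑s ∪ Set.Iic a : Set ℤ) := hrange ▸ Set.mem_range_self 0
      rcases this with h | h
      · exact hb _ h
      · exact lt_of_le_of_lt h (hs b (mem_insert_self b s))
    have hbs : b ∉ s := fun h => (hb b h).false
    refine ⟨fun | 0 => b | i + 1 => d i, strictAnti_nat_of_succ_lt ?_, ?_, ?_⟩
    · rintro (_ | i)
      exacts [hd0, hd (Nat.lt_succ_self i)]
    · ext x
      rw [coe_insert, Set.insert_union, ← hrange]
      constructor
      · rintro ⟨_ | i, rfl⟩
        exacts [Set.mem_insert _ _, Set.mem_insert_of_mem _ (Set.mem_range_self i)]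
      · rintro (rfl | ⟨i, rfl⟩)
        exacts [⟨0, rfl⟩, ⟨i + 1, rfl⟩]
    · rintro (_ | i) hi
      · simp [card_insert_of_notMem hbs] at hi
      · rw [card_insert_of_notMem hbs] at hi ⊢
        simp only
        rw [htail i (by omega)]
        push_cast
        ring

lemma two_mul_sum_range_sub_sum_Ioc (h : n ≤ K) :
    2 * (∑ i ∈ range K, ((n : ℤ) - i) - ∑ x ∈ Ioc ((n : ℤ) - K) 0, x) = n * (n + 1) := by
  induction K, h using Nat.le_induction with
  | base =>
    simp only [sub_self, Ioc_self, sum_empty, sub_zero]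
    induction n with
    | zero => simp
    | succ n ih =>
      rw [sum_range_succ']
      push_cast at ih ⊢
      simp only [add_sub_add_right_eq_sub]
      linear_combination ih
  | succ K hK ih =>
    have hIoc : Ioc ((n : ℤ) - (K + 1 : ℕ)) 0 = insert ((n : ℤ) - K) (Ioc ((n : ℤ) - K) 0) := by
      ext x; simp only [mem_insert, mem_Ioc]; push_cast; omega
    rw [sum_range_succ, hIoc, sum_insert (by simp)]
    linear_combination ih

end StrictAntiSeq

section MayaDiagram

/-- `c m` is the multiplicity of the part `m + 1` of a partition; `mayaSeq n c` enumerates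
decreasingly the corresponding Maya diagram of charge `n`. -/
def mayaSeq (n : ℕ) (c : ℕ →₀ ℕ) (i : ℕ) : ℤ := n - i + ∑ m ∈ c.support with i ≤ m, (c m : ℤ)

lemma mayaSeq_sub_mayaSeq_succ (n : ℕ) (c : ℕ →₀ ℕ) (i : ℕ) :
    mayaSeq n c i - mayaSeq n c (i + 1) = c i + 1 := by
  have hsplit : ∀ m, (if i ≤ m then (c m : ℤ) else 0)
      = (if i = m then (c m : ℤ) else 0) + if i + 1 ≤ m then (c m : ℤ) else 0 := by
    intro m; split_ifs <;> omega
  simp only [mayaSeq, sum_filter, hsplit, sum_add_distrib, sum_ite_eq, Finsupp.mem_support_iff]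
  split_ifs with h
  · push_cast; ring
  · rw [not_not.1 h]; push_cast; ring

lemma strictAnti_mayaSeq (n : ℕ) (c : ℕ →₀ ℕ) : StrictAnti (mayaSeq n c) :=
  strictAnti_nat_of_succ_lt fun i => by
    linarith [mayaSeq_sub_mayaSeq_succ n c i, (c i).cast_nonneg (α := ℤ)]

lemma mayaSeq_injective (n : ℕ) : Function.Injective (mayaSeq n) := by
  intro c c' h
  ext m
  have := mayaSeq_sub_mayaSeq_succ n c m
  rw [h, mayaSeq_sub_mayaSeq_succ] at this
  omega

variable {n N K : ℕ} {c : ℕ →₀ ℕ}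

lemma mayaSeq_of_le (hN : ∀ m, N ≤ m → c m = 0) {i : ℕ} (hi : N ≤ i) : mayaSeq n c i = n - i := by
  rw [mayaSeq, add_eq_left]
  refine sum_eq_zero fun m hm => ?_
  rw [mem_filter, Finsupp.mem_support_iff] at hm
  exact absurd (hN m (hi.trans hm.2)) hm.1

lemma mayaSeq_eq_of_sub_succ {d : ℕ → ℤ} (hK : ∀ i, K ≤ i → d i = n - i)
    (hc : ∀ i, (c i : ℤ) + 1 = d i - d (i + 1)) : mayaSeq n c = d := by
  have hc0 : ∀ m, K ≤ m → c m = 0 := fun m hm => by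
    have := hc m; rw [hK m hm, hK (m + 1) (by omega)] at this; push_cast at this; omega
  have hstep (i : ℕ) : mayaSeq n c i - d i = mayaSeq n c (i + 1) - d (i + 1) := by
    linarith [mayaSeq_sub_mayaSeq_succ n c i, hc i]
  have hshift (i k : ℕ) : mayaSeq n c i - d i = mayaSeq n c (i + k) - d (i + k) := by
    induction k with
    | zero => rfl
    | succ k ih => rw [ih, hstep, add_assoc]
  funext i
  have := hshift i K
  rw [mayaSeq_of_le hc0 (Nat.le_add_left K i), hK _ (Nat.le_add_left K i)] at this
  linarith

lemma exists_mayaSeq_eq {d : ℕ → ℤ} (hd : StrictAnti d) (hK : ∀ i, K ≤ i → d i = n - i) :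
    ∃ c, mayaSeq n c = d := by
  let c : ℕ →₀ ℕ := Finsupp.onFinset (range K) (fun m => (d m - d (m + 1) - 1).toNat)
    fun m hm => mem_range.2 <| by
      by_contra h
      rw [hK m (by omega), hK (m + 1) (by omega)] at hm
      exact hm (by push_cast; omega)
  refine ⟨c, mayaSeq_eq_of_sub_succ hK fun i => ?_⟩
  have := hd (lt_add_one i)
  simp only [c, Finsupp.onFinset_apply]
  omega

lemma sum_range_mayaSeq (hN : ∀ m, N ≤ m → c m = 0) :
    ∑ i ∈ range N, mayaSeq n c i
      = ∑ i ∈ range N, ((n : ℤ) - i) + ((c.sum fun m k => (m + 1) * k : ℕ) : ℤ) := by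
  have hlt : ∀ m ∈ c.support, m < N := fun m hm => by
    by_contra h; exact Finsupp.mem_support_iff.1 hm (hN m (not_lt.1 h))
  simp only [mayaSeq, sum_add_distrib, Finsupp.sum, Nat.cast_sum, Nat.cast_mul]
  congr 1
  rw [sum_comm' (t' := c.support) (s' := fun m => range (m + 1))]
  · simp
  · intro i m
    simp only [mem_range, mem_filter]
    constructor
    · rintro ⟨_, hm, him⟩; exact ⟨by omega, hm⟩
    · rintro ⟨him, hm⟩; exact ⟨by have := hlt m hm; omega, hm, by omega⟩

end MayaDiagram

section KinkPairs

def KinkPairs.mayaDiagram {n : ℕ} (p : KinkPairs n) : Set ℤ := ↑p.1.2 ∪ (Set.Iic 0 \ ↑p.1.1)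

lemma KinkPairs.mayaDiagram_injective (n : ℕ) : Function.Injective (mayaDiagram (n := n)) := by
  intro p p' h
  have hmem := Set.ext_iff.1 h
  simp only [mayaDiagram, Set.mem_union, mem_coe, Set.mem_sdiff, Set.mem_Iic] at hmem
  refine Subtype.ext (Prod.ext (Finset.ext fun x => ?_) (Finset.ext fun y => ?_))
  · have := hmem x; have := p.2.1 x; have := p'.2.1 x; have := p.2.2.1 x; have := p'.2.2.1 x
    grind
  · have := hmem y; have := p.2.1 y; have := p'.2.1 y; have := p.2.2.1 y; have := p'.2.2.1 y
    grind

def mayaDepth (n : ℕ) (c : ℕ →₀ ℕ) : ℕ := c.support.sup id + 1 + n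

variable {n : ℕ} {c : ℕ →₀ ℕ}

lemma apply_eq_zero_of_mayaDepth_le {m : ℕ} (hm : mayaDepth n c ≤ m) : c m = 0 := by
  by_contra h
  have := le_sup (f := id) (Finsupp.mem_support_iff.2 h)
  simp only [mayaDepth, id] at this hm
  omega

lemma mayaSeq_of_mayaDepth_le {i : ℕ} (hi : mayaDepth n c ≤ i) : mayaSeq n c i = n - i :=
  mayaSeq_of_le (fun _ => apply_eq_zero_of_mayaDepth_le) hi

lemma le_mayaDepth : n ≤ mayaDepth n c := Nat.le_add_left _ _

/-- With `K = mayaDepth n c`, the Maya diagram is `(range K).image (mayaSeq n c) ∪ Iic (n - K)`,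
so `A` and `B` can be read off the window `Ioc (n - K) 0`. -/
noncomputable def kinkPairOf (n : ℕ) (c : ℕ →₀ ℕ) : KinkPairs n :=
  ⟨(Ioc ((n : ℤ) - mayaDepth n c) 0 \ (range (mayaDepth n c)).image (mayaSeq n c),
    (range (mayaDepth n c)).image (mayaSeq n c) \ Ioc ((n : ℤ) - mayaDepth n c) 0),
    fun _ hx => (mem_Ioc.1 (mem_sdiff.1 hx).1).2,
    fun y hy => ((mem_image_range_sdiff_Ioc_iff (strictAnti_mayaSeq n c)
      (fun _ => mayaSeq_of_mayaDepth_le) le_mayaDepth y).1 hy).1,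
    card_image_range_sdiff_Ioc (strictAnti_mayaSeq n c) le_mayaDepth⟩

lemma range_mayaSeq : Set.range (mayaSeq n c) = (kinkPairOf n c).mayaDiagram := by
  ext y
  have hA := mem_Ioc_sdiff_image_range_iff (fun _ => mayaSeq_of_mayaDepth_le (n := n) (c := c)) y
  have hB := mem_image_range_sdiff_Ioc_iff (strictAnti_mayaSeq n c)
    (fun _ => mayaSeq_of_mayaDepth_le) le_mayaDepth y
  simp only [KinkPairs.mayaDiagram, kinkPairOf, Set.mem_union, mem_coe, Set.mem_sdiff,
    Set.mem_Iic] at hA hB ⊢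
  grind

lemma two_mul_sum_kinkPairOf :
    2 * ((∑ y ∈ (kinkPairOf n c).1.2, y) - ∑ x ∈ (kinkPairOf n c).1.1, x)
      = ((2 * (c.sum fun m k => (m + 1) * k) + n * (n + 1) : ℕ) : ℤ) := by
  simp only [kinkPairOf]
  rw [sum_sdiff_sub_sum_sdiff, sum_image (strictAnti_mayaSeq n c).injective.injOn,
    sum_range_mayaSeq (fun _ => apply_eq_zero_of_mayaDepth_le)]
  push_cast
  linear_combination two_mul_sum_range_sub_sum_Ioc (le_mayaDepth (n := n) (c := c))

theorem kinkPairOf_injective (n : ℕ) : Function.Injective (kinkPairOf n) := by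
  intro c c' h
  refine mayaSeq_injective n (funext (congrFun ?_))
  refine ((strictAnti_mayaSeq n c).dual_right.range_inj (strictAnti_mayaSeq n c').dual_right).1 ?_
  rw [Set.range_comp, Set.range_comp, range_mayaSeq, range_mayaSeq, h]

theorem kinkPairOf_surjective (n : ℕ) : Function.Surjective (kinkPairOf n) := by
  rintro ⟨⟨A, B⟩, hA, hB, hcard⟩
  obtain ⟨K, hnK, hAK⟩ : ∃ K : ℕ, n ≤ K ∧ ∀ x ∈ A, (n : ℤ) - K < x := by
    obtain ⟨m, hm⟩ := A.bddBelow
    exact ⟨n + (-m).toNat + 1, by omega, fun x hx => by have := hm hx; omega⟩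
  set s := B ∪ (Ioc ((n : ℤ) - K) 0 \ A)
  have hs : ∀ x ∈ s, (n : ℤ) - K < x := by
    intro x hx
    rcases mem_union.1 hx with hx | hx
    · have := hB x hx; omega
    · exact (mem_Ioc.1 (Finset.mem_sdiff.1 hx).1).1
  have hscard : #s = K := by
    have hdisj : Disjoint B (Ioc ((n : ℤ) - K) 0 \ A) := disjoint_left.2 fun x hxB hx => by
      have := hB x hxB; have := (mem_Ioc.1 (Finset.mem_sdiff.1 hx).1).2; omega
    have hsub : A ⊆ Ioc ((n : ℤ) - K) 0 := fun x hx => mem_Ioc.2 ⟨hAK x hx, hA x hx⟩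
    have hA_le := card_le_card hsub
    rw [Int.card_Ioc] at hA_le
    rw [card_union_of_disjoint hdisj, card_sdiff_of_subset hsub, Int.card_Ioc, hcard]
    dsimp only
    omega
  obtain ⟨d, hd, hrange, htail⟩ := exists_strictAnti_range_eq s _ hs
  obtain ⟨c, hc⟩ := exists_mayaSeq_eq hd (K := K) fun i hi => by
    rw [htail i (hscard ▸ hi), hscard]; ring
  refine ⟨c, KinkPairs.mayaDiagram_injective n ?_⟩
  rw [← range_mayaSeq, hc, hrange]
  ext x
  have := hAK x; have := hA x; have := hB x
  simp only [KinkPairs.mayaDiagram, s, Set.mem_union, mem_coe, mem_union, Finset.mem_sdiff,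
    mem_Ioc, Set.mem_Iic, Set.mem_sdiff]
  grind

noncomputable def kinkPairEquiv (n : ℕ) : (ℕ →₀ ℕ) ≃ KinkPairs n :=
  Equiv.ofBijective (kinkPairOf n) ⟨kinkPairOf_injective n, kinkPairOf_surjective n⟩

lemma kinkPairEquiv_apply (n : ℕ) (c : ℕ →₀ ℕ) : kinkPairEquiv n c = kinkPairOf n c := rfl

lemma kinkWeight_kinkPairOf (q : ℝ) (n : ℕ) (c : ℕ →₀ ℕ) :
    kinkWeight q (kinkPairOf n c)
      = q ^ (n * (n + 1)) * c.prod fun m k => (q ^ (2 * (m + 1))) ^ k := by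
  rw [kinkWeight, two_mul_sum_kinkPairOf, zpow_natCast, pow_add, mul_comm, Finsupp.prod,
    Finsupp.sum, mul_sum, ← prod_pow_eq_pow_sum]
  congr 1
  exact prod_congr rfl fun m _ => by rw [← pow_mul, ← mul_assoc]

end KinkPairs

theorem stmt2 (q : ℝ) (hq0 : 0 < q) (hq1 : q < 1) (n : ℕ) :
    Summable (fun p : KinkPairs n => kinkWeight q p) ∧
    (∑' p : KinkPairs n, kinkWeight q p)
      = q ^ (n * (n + 1)) / ∏' m : ℕ, (1 - q ^ (2 * (m + 1))) := by
  have hsq : q ^ 2 < 1 := pow_lt_one₀ hq0.le hq1 two_ne_zero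
  have hsum : Summable fun m : ℕ => q ^ (2 * (m + 1)) := by
    have h := (summable_geometric_of_lt_one (sq_nonneg q) hsq).mul_left (q ^ 2)
    refine h.congr fun m => ?_
    ring
  have hpart := hasSum_finsupp_prod_pow (fun m => by positivity)
    (fun m => pow_lt_one₀ hq0.le hq1 (by omega)) hsum
  have hZ : HasSum (fun p : KinkPairs n => kinkWeight q p)
      (q ^ (n * (n + 1)) / ∏' m : ℕ, (1 - q ^ (2 * (m + 1)))) := by
    rw [← (kinkPairEquiv n).hasSum_iff, div_eq_mul_inv]
    simp only [Function.comp_def, kinkPairEquiv_apply, kinkWeight_kinkPairOf]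
    exact hpart.mul_left _
  exact ⟨hZ.summable, hZ.tsum_eq⟩
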